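/- arXiv:2009.00458 — 2 statements merged into one kernel-verified Lean document; each statement's English description precedes it below -/
import Mathlib

section
/- Let X and Y be bounded metric spaces whose metric segment [X,Y] is extreme, i.e. 2·d_GH(X,Y) = diam X = diam Y > 0. Suppose a metric space Z satisfies d_GH(X,Z) < ∞, d_GH(X,Y) + d_GH(Y,Z) = d_GH(X,Z) and d_GH(Y,Z) > 0 (i.e. the segment [X,Y] extends beyond Y to Z). Then Z is bounded, diam Z > diam Y, and 2·d_GH(Y,Z) = diam Z − diam Y (Z is subextreme with respect to Y). -/
/-! The proof only uses two elementary bounds, `diam Z ≤ diam X + 2 d_GH(X,Z)` and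
`2 d_GH(X,Z) ≤ max (diam X) (diam Z)`. Since `Y` lies between `X` and `Z` and the segment `[X,Y]`
is extreme, `diam Y + 2 d_GH(Y,Z) = 2 d_GH(X,Z) ≤ max (diam Y) (diam Z)`. As `d_GH(Y,Z) > 0`, the
maximum must be `diam Z > diam Y`, and the first bound, applied to `Y` and `Z`, gives the reverse
inequality `diam Z ≤ diam Y + 2 d_GH(Y,Z)`. -/

open Metric Set
open scoped ENNReal

/-- A correspondence between `X` and `Y`: a relation whose projections are surjective. -/
def IsCorrespondence {X Y : Type*} (R : Set (X × Y)) : Prop :=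
  (∀ x : X, ∃ y : Y, (x, y) ∈ R) ∧ (∀ y : Y, ∃ x : X, (x, y) ∈ R)

/-- The distortion of a relation `R ⊆ X × Y`. -/
noncomputable def corrDistortion {X Y : Type*} [MetricSpace X] [MetricSpace Y]
    (R : Set (X × Y)) : ℝ≥0∞ :=
  ⨆ p ∈ R, ⨆ q ∈ R, ENNReal.ofReal |dist p.1 q.1 - dist p.2 q.2|

/-- The Gromov–Hausdorff distance between (arbitrary) metric spaces:
half the infimum of distortions of correspondences. -/
noncomputable def ghDist (X Y : Type*) [MetricSpace X] [MetricSpace Y] : ℝ≥0∞ :=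
  (⨅ (R : Set (X × Y)) (_ : IsCorrespondence R), corrDistortion R) / 2

section GromovHausdorff

variable {X Z : Type*} [MetricSpace X] [MetricSpace Z]

variable (X Z) in
lemma two_mul_ghDist_eq_iInf :
    2 * ghDist X Z = ⨅ (R : Set (X × Z)) (_ : IsCorrespondence R), corrDistortion R := by
  rw [ghDist, mul_comm, ENNReal.div_mul_cancel two_ne_zero ENNReal.ofNat_ne_top]

lemma ofReal_abs_dist_sub_dist_le_corrDistortion {R : Set (X × Z)} {p q : X × Z}
    (hp : p ∈ R) (hq : q ∈ R) :
    ENNReal.ofReal |dist p.1 q.1 - dist p.2 q.2| ≤ corrDistortion R :=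
  le_iSup₂_of_le p hp (le_iSup₂_of_le q hq le_rfl)

lemma IsCorrespondence.ediam_le_ediam_add_corrDistortion {R : Set (X × Z)}
    (hR : IsCorrespondence R) :
    ediam (univ : Set Z) ≤ ediam (univ : Set X) + corrDistortion R := by
  refine ediam_le fun z _ z' _ => ?_
  obtain ⟨x, hx⟩ := hR.2 z
  obtain ⟨x', hx'⟩ := hR.2 z'
  have hdist : dist z z' ≤ dist x x' + |dist x x' - dist z z'| := by
    linarith [neg_abs_le (dist x x' - dist z z')]
  calc edist z z' = ENNReal.ofReal (dist z z') := edist_dist _ _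
    _ ≤ ENNReal.ofReal (dist x x') + ENNReal.ofReal |dist x x' - dist z z'| :=
        (ENNReal.ofReal_le_ofReal hdist).trans ENNReal.ofReal_add_le
    _ ≤ ediam (univ : Set X) + corrDistortion R := by
        gcongr
        · rw [← edist_dist]
          exact edist_le_ediam_of_mem (mem_univ _) (mem_univ _)
        · exact ofReal_abs_dist_sub_dist_le_corrDistortion (p := (x, z)) (q := (x', z')) hx hx'

variable (X Z) in
lemma ediam_le_ediam_add_two_mul_ghDist :
    ediam (univ : Set Z) ≤ ediam (univ : Set X) + 2 * ghDist X Z := by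
  rw [two_mul_ghDist_eq_iInf, ← tsub_le_iff_left]
  exact le_iInf₂ fun R hR => tsub_le_iff_left.2 hR.ediam_le_ediam_add_corrDistortion

variable (X Z) in
lemma two_mul_ghDist_le_max_ediam [Nonempty X] [Nonempty Z] :
    2 * ghDist X Z ≤ max (ediam (univ : Set X)) (ediam (univ : Set Z)) := by
  have hcorr : IsCorrespondence (univ : Set (X × Z)) :=
    ⟨fun _ => ⟨Classical.arbitrary Z, mem_univ _⟩, fun _ => ⟨Classical.arbitrary X, mem_univ _⟩⟩
  rw [two_mul_ghDist_eq_iInf]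
  refine (iInf₂_le _ hcorr).trans <| iSup₂_le fun p _ => iSup₂_le fun q _ => ?_
  have habs : |dist p.1 q.1 - dist p.2 q.2| ≤ max (dist p.1 q.1) (dist p.2 q.2) := by
    have := dist_nonneg (x := p.1) (y := q.1)
    have := dist_nonneg (x := p.2) (y := q.2)
    rw [abs_sub_le_iff]
    constructor <;> linarith [le_max_left (dist p.1 q.1) (dist p.2 q.2),
      le_max_right (dist p.1 q.1) (dist p.2 q.2)]
  calc ENNReal.ofReal |dist p.1 q.1 - dist p.2 q.2|
      ≤ ENNReal.ofReal (max (dist p.1 q.1) (dist p.2 q.2)) := ENNReal.ofReal_le_ofReal habs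
    _ = max (edist p.1 q.1) (edist p.2 q.2) := by
        rw [ENNReal.ofReal_max, ← edist_dist, ← edist_dist]
    _ ≤ max (ediam (univ : Set X)) (ediam (univ : Set Z)) :=
        max_le_max (edist_le_ediam_of_mem (mem_univ _) (mem_univ _))
          (edist_le_ediam_of_mem (mem_univ _) (mem_univ _))

end GromovHausdorff

lemma ediam_lt_and_two_mul_ghDist_eq_of_extreme {X Y Z : Type*} [MetricSpace X] [MetricSpace Y]
    [MetricSpace Z] [Nonempty X] [Nonempty Z]
    (hYb : ediam (univ : Set Y) ≠ ⊤)
    (hext : 2 * ghDist X Y = ediam (univ : Set Y))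
    (hdiam : ediam (univ : Set X) = ediam (univ : Set Y))
    (hbtw : ghDist X Y + ghDist Y Z = ghDist X Z) (hYZ : ghDist Y Z ≠ 0) :
    ediam (univ : Set Y) < ediam (univ : Set Z) ∧
      2 * ghDist Y Z = ediam (univ : Set Z) - ediam (univ : Set Y) := by
  set dY := ediam (univ : Set Y)
  set dZ := ediam (univ : Set Z)
  have hkey : dY + 2 * ghDist Y Z ≤ max dY dZ :=
    calc dY + 2 * ghDist Y Z = 2 * ghDist X Z := by rw [← hext, ← mul_add, hbtw]
      _ ≤ max dY dZ := hdiam ▸ two_mul_ghDist_le_max_ediam X Z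
  have hlt : dY < dZ := by
    have hgrow : dY < dY + 2 * ghDist Y Z :=
      ENNReal.lt_add_right hYb (mul_ne_zero two_ne_zero hYZ)
    exact (lt_max_iff.1 (hgrow.trans_le hkey)).resolve_left (lt_irrefl dY)
  refine ⟨hlt, le_antisymm ?_ ?_⟩
  · exact ENNReal.le_sub_of_add_le_left hYb (max_eq_right hlt.le ▸ hkey)
  · exact tsub_le_iff_left.2 (ediam_le_ediam_add_two_mul_ghDist Y Z)

theorem stmt9_general {X Y : Type u} [MetricSpace X] [MetricSpace Y] [Nonempty X]
    (hXb : EMetric.diam (Set.univ : Set X) ≠ ⊤)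
    (hYb : EMetric.diam (Set.univ : Set Y) ≠ ⊤)
    (hext : 2 * ghDist X Y = ENNReal.ofReal (Metric.diam (Set.univ : Set X)))
    (hdiam : Metric.diam (Set.univ : Set X) = Metric.diam (Set.univ : Set Y))
    (Z : Type v) [MetricSpace Z] [Nonempty Z]
    (hfin : ghDist X Z ≠ ⊤)
    (hbtw : ghDist X Y + ghDist Y Z = ghDist X Z)
    (hYZ : 0 < ghDist Y Z) :
    EMetric.diam (Set.univ : Set Z) ≠ ⊤ ∧
    Metric.diam (Set.univ : Set Y) < Metric.diam (Set.univ : Set Z) ∧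
    2 * ghDist Y Z =
      ENNReal.ofReal (Metric.diam (Set.univ : Set Z) - Metric.diam (Set.univ : Set Y)) := by
  change ediam (univ : Set X) ≠ ⊤ at hXb
  change ediam (univ : Set Y) ≠ ⊤ at hYb
  have hediam : ediam (univ : Set X) = ediam (univ : Set Y) :=
    (ENNReal.toReal_eq_toReal_iff' hXb hYb).1 hdiam
  have hext' : 2 * ghDist X Y = ediam (univ : Set Y) := by
    rw [hext, Metric.diam, ENNReal.ofReal_toReal hXb, hediam]
  have hZb : ediam (univ : Set Z) ≠ ⊤ :=
    ne_top_of_le_ne_top (ENNReal.add_ne_top.2 ⟨hXb, ENNReal.mul_ne_top ENNReal.ofNat_ne_top hfin⟩)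
      (ediam_le_ediam_add_two_mul_ghDist X Z)
  obtain ⟨hlt, heq⟩ :=
    ediam_lt_and_two_mul_ghDist_eq_of_extreme hYb hext' hediam hbtw hYZ.ne'
  refine ⟨hZb, (ENNReal.toReal_lt_toReal hYb hZb).2 hlt, ?_⟩
  rw [heq, Metric.diam, Metric.diam, ENNReal.ofReal_sub _ ENNReal.toReal_nonneg,
    ENNReal.ofReal_toReal hZb, ENNReal.ofReal_toReal hYb]

/-- if the metric segment `[X,Y]` is extreme
(`2·d_GH(X,Y) = diam X = diam Y > 0`) and it extends beyond `Y` to `Z`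
(`Y` lies between `X` and `Z`, `d_GH(Y,Z) > 0`), then `Z` is bounded,
`diam Z > diam Y`, and `Z` is subextreme with respect to `Y`:
`2·d_GH(Y,Z) = diam Z − diam Y`. -/
theorem stmt9 {X Y : Type u} [MetricSpace X] [MetricSpace Y] [Nonempty X] [Nonempty Y]
    (hXb : EMetric.diam (Set.univ : Set X) ≠ ⊤)
    (hYb : EMetric.diam (Set.univ : Set Y) ≠ ⊤)
    (hext : 2 * ghDist X Y = ENNReal.ofReal (Metric.diam (Set.univ : Set X)))
    (hdiam : Metric.diam (Set.univ : Set X) = Metric.diam (Set.univ : Set Y))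
    (hpos : 0 < Metric.diam (Set.univ : Set X))
    (Z : Type v) [MetricSpace Z] [Nonempty Z]
    (hfin : ghDist X Z ≠ ⊤)
    (hbtw : ghDist X Y + ghDist Y Z = ghDist X Z)
    (hYZ : 0 < ghDist Y Z) :
    EMetric.diam (Set.univ : Set Z) ≠ ⊤ ∧
    Metric.diam (Set.univ : Set Y) < Metric.diam (Set.univ : Set Z) ∧
    2 * ghDist Y Z =
      ENNReal.ofReal (Metric.diam (Set.univ : Set Z) - Metric.diam (Set.univ : Set Y)) :=
  stmt9_general hXb hYb hext hdiam Z hfin hbtw hYZ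
end

section
/- Let X be a bounded metric space, m a cardinal with 1 < m ≤ #X, and λ a real number with λ ≥ diam X + α_m(X) and λ > 0. Then 2·d_GH(λΔ_m, X) = λ − α_m(X). -/
open Metric Set
open scoped ENNReal

/-- `alphaSup I X` is `α_m(X)` for `m = #I`: the supremum, over all partitions of `X`
into nonempty subsets indexed by `I`, of the infimum of distances between distinct parts. -/
noncomputable def alphaSup (I : Type v) (X : Type u) [MetricSpace X] : ℝ≥0∞ :=
  ⨆ D ∈ {D : I → Set X |
      (∀ i, (D i).Nonempty) ∧ (⋃ i, D i = Set.univ) ∧ Pairwise (Function.onFun Disjoint D)},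
    ⨅ (i : I) (j : I) (_ : i ≠ j), ⨅ x ∈ D i, ⨅ y ∈ D j, edist x y

/-! A partition `D` of `X` indexed by the vertices of the simplex `λΔ_m` gives the correspondence
`{(s, x) | x ∈ D s}`, whose distortion is at most `λ - α(D)` once `diam X + α(D) ≤ λ`.
Conversely, if the fibres of a correspondence over distinct vertices are disjoint, they form a
partition `D` and the distortion is at least `λ - α(D)`; if two of them meet, it is at least `λ`. -/

section

variable {I X : Type*}

def IsNonemptyPartition (D : I → Set X) : Prop :=
  (∀ i, (D i).Nonempty) ∧ (⋃ i, D i = Set.univ) ∧ Pairwise (Function.onFun Disjoint D)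

theorem isNonemptyPartition_fibers {g : X → I} (hg : Function.Surjective g) :
    IsNonemptyPartition fun i => g ⁻¹' {i} :=
  ⟨fun i => (hg i).imp fun _ hx => hx,
    Set.eq_univ_of_forall fun x => Set.mem_iUnion.mpr ⟨g x, rfl⟩,
    fun _ _ hij => Set.disjoint_left.mpr fun _ hx hy => hij (hx.symm.trans hy)⟩

theorem exists_isNonemptyPartition [Nonempty I] (f : I ↪ X) :
    ∃ D : I → Set X, IsNonemptyPartition D :=
  ⟨_, isNonemptyPartition_fibers (Function.invFun_surjective f.injective)⟩

theorem isCorrespondence_of_isNonemptyPartition {D : I → Set X} (hD : IsNonemptyPartition D) :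
    IsCorrespondence {p : I × X | p.2 ∈ D p.1} :=
  ⟨hD.1, fun x => Set.mem_iUnion.mp (hD.2.1 ▸ Set.mem_univ x)⟩

theorem isNonemptyPartition_fibers_of_isCorrespondence {R : Set (I × X)}
    (hR : IsCorrespondence R)
    (hdisj : Pairwise (Function.onFun Disjoint fun i => {x | (i, x) ∈ R})) :
    IsNonemptyPartition fun i => {x | (i, x) ∈ R} :=
  ⟨hR.1, Set.eq_univ_of_forall fun x => Set.mem_iUnion.mpr (hR.2 x), hdisj⟩

variable [MetricSpace X]

/-- `α(D)` in the paper. -/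
noncomputable def partitionSeparation (D : I → Set X) : ℝ≥0∞ :=
  ⨅ (i : I) (j : I) (_ : i ≠ j), ⨅ x ∈ D i, ⨅ y ∈ D j, edist x y

theorem alphaSup_eq_iSup_partitionSeparation :
    alphaSup I X = ⨆ D ∈ {D : I → Set X | IsNonemptyPartition D}, partitionSeparation D :=
  rfl

theorem partitionSeparation_le_alphaSup {D : I → Set X} (hD : IsNonemptyPartition D) :
    partitionSeparation D ≤ alphaSup I X :=
  le_iSup₂_of_le D hD le_rfl

theorem partitionSeparation_le_edist {D : I → Set X} {i j : I} (hij : i ≠ j) {x y : X}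
    (hx : x ∈ D i) (hy : y ∈ D j) : partitionSeparation D ≤ edist x y :=
  (iInf_le _ i).trans <| (iInf_le _ j).trans <| (iInf_le _ hij).trans <|
    (iInf₂_le x hx).trans (iInf₂_le y hy)

theorem le_corrDistortion {Y : Type*} [MetricSpace Y] {R : Set (X × Y)} {p q : X × Y}
    (hp : p ∈ R) (hq : q ∈ R) :
    ENNReal.ofReal |dist p.1 q.1 - dist p.2 q.2| ≤ corrDistortion R :=
  le_iSup₂_of_le p hp (le_iSup₂_of_le q hq le_rfl)

theorem corrDistortion_le {Y : Type*} [MetricSpace Y] {R : Set (X × Y)} {c : ℝ≥0∞}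
    (h : ∀ p ∈ R, ∀ q ∈ R, ENNReal.ofReal |dist p.1 q.1 - dist p.2 q.2| ≤ c) :
    corrDistortion R ≤ c :=
  iSup₂_le fun p hp => iSup₂_le fun q hq => h p hp q hq

variable {S : Type*} [MetricSpace S] {lam : ℝ}

theorem corrDistortion_partition_le (hS : ∀ p q : S, p ≠ q → dist p q = lam) (D : S → Set X)
    (hD : ediam (Set.univ : Set X) + partitionSeparation D ≤ ENNReal.ofReal lam) :
    corrDistortion {p : S × X | p.2 ∈ D p.1} ≤ ENNReal.ofReal lam - partitionSeparation D := by
  have hsep : partitionSeparation D ≠ ⊤ :=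
    ne_top_of_le_ne_top ENNReal.ofReal_ne_top (le_add_self.trans hD)
  have hedist : ∀ x y : X, edist x y ≤ ENNReal.ofReal lam - partitionSeparation D :=
    fun x y => (edist_le_ediam_of_mem (mem_univ x) (mem_univ y)).trans
      (ENNReal.le_sub_of_add_le_right hsep hD)
  refine corrDistortion_le fun ⟨s, x⟩ hx ⟨t, y⟩ hy => ?_
  by_cases hst : s = t
  · subst hst
    simpa [dist_self, abs_of_nonneg dist_nonneg, edist_dist] using hedist x y
  · have hle : dist x y ≤ lam := by
      have := (hedist x y).trans tsub_le_self
      rw [edist_dist] at this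
      exact (ENNReal.ofReal_le_ofReal_iff (hS s t hst ▸ dist_nonneg)).mp this
    rw [hS s t hst, abs_of_nonneg (sub_nonneg.mpr hle), ENNReal.ofReal_sub _ dist_nonneg,
      ← edist_dist]
    exact tsub_le_tsub_left (partitionSeparation_le_edist hst hx hy) _

theorem ofReal_le_corrDistortion_of_not_disjoint (hS : ∀ p q : S, p ≠ q → dist p q = lam)
    {R : Set (S × X)} {s t : S} (hst : s ≠ t)
    (h : ¬Disjoint {x | (s, x) ∈ R} {x | (t, x) ∈ R}) :
    ENNReal.ofReal lam ≤ corrDistortion R := by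
  obtain ⟨x, hs, ht⟩ := Set.not_disjoint_iff.mp h
  have := le_corrDistortion hs ht
  rw [hS s t hst, dist_self, sub_zero] at this
  exact (ENNReal.ofReal_le_ofReal (le_abs_self lam)).trans this

theorem sub_corrDistortion_le_partitionSeparation (hS : ∀ p q : S, p ≠ q → dist p q = lam)
    (R : Set (S × X)) :
    ENNReal.ofReal lam - corrDistortion R ≤ partitionSeparation fun s => {x | (s, x) ∈ R} := by
  refine le_iInf fun s => le_iInf fun t => le_iInf fun hst =>
    le_iInf₂ fun x hx => le_iInf₂ fun y hy => tsub_le_iff_left.mpr ?_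
  calc ENNReal.ofReal lam ≤ ENNReal.ofReal (|lam - dist x y| + dist x y) :=
        ENNReal.ofReal_le_ofReal (by linarith [le_abs_self (lam - dist x y)])
    _ = ENNReal.ofReal |dist (s, x).1 (t, y).1 - dist (s, x).2 (t, y).2| + edist x y := by
        rw [ENNReal.ofReal_add (abs_nonneg _) dist_nonneg, edist_dist, hS s t hst]
    _ ≤ corrDistortion R + edist x y := by grw [le_corrDistortion (R := R) hx hy]

theorem sub_alphaSup_le_corrDistortion (hS : ∀ p q : S, p ≠ q → dist p q = lam)
    {R : Set (S × X)} (hR : IsCorrespondence R) :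
    ENNReal.ofReal lam - alphaSup S X ≤ corrDistortion R := by
  by_cases hdisj : Pairwise (Function.onFun Disjoint fun s => {x | (s, x) ∈ R})
  · refine tsub_le_iff_tsub_le.mp ((sub_corrDistortion_le_partitionSeparation hS R).trans ?_)
    exact partitionSeparation_le_alphaSup (isNonemptyPartition_fibers_of_isCorrespondence hR hdisj)
  · obtain ⟨s, t, hst, hmeet⟩ : ∃ s t, s ≠ t ∧ ¬Disjoint {x | (s, x) ∈ R} {x | (t, x) ∈ R} := by
      simpa [Pairwise, Function.onFun] using hdisj
    exact tsub_le_self.trans (ofReal_le_corrDistortion_of_not_disjoint hS hst hmeet)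

end

theorem stmt13_general {X S : Type u} [MetricSpace X] [MetricSpace S]
    (hXb : EMetric.diam (Set.univ : Set X) ≠ ⊤)
    (lam : ℝ)
    (hS : ∀ p q : S, p ≠ q → dist p q = lam)
    (hS1 : 1 < Cardinal.mk S) (hSX : Cardinal.mk S ≤ Cardinal.mk X)
    (hge : ENNReal.ofReal (Metric.diam (Set.univ : Set X)) + alphaSup S X
        ≤ ENNReal.ofReal lam) :
    2 * ghDist S X = ENNReal.ofReal lam - alphaSup S X := by
  have : Nonempty S := (Cardinal.one_lt_iff_nontrivial.mp hS1).to_nonempty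
  obtain ⟨f⟩ := Cardinal.le_def S X |>.mp hSX
  have : Nonempty {D // D ∈ {D : S → Set X | IsNonemptyPartition D}} :=
    let ⟨D, hD⟩ := exists_isNonemptyPartition f; ⟨⟨D, hD⟩⟩
  have hediam : ediam (Set.univ : Set X) = ENNReal.ofReal (diam Set.univ) :=
    (ENNReal.ofReal_toReal hXb).symm
  suffices h : ⨅ (R : Set (S × X)) (_ : IsCorrespondence R), corrDistortion R
      = ENNReal.ofReal lam - alphaSup S X by
    rw [ghDist, h, ENNReal.mul_div_cancel two_ne_zero ENNReal.ofNat_ne_top]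
  refine le_antisymm ?_ (le_iInf₂ fun R hR => sub_alphaSup_le_corrDistortion hS hR)
  rw [alphaSup_eq_iSup_partitionSeparation, iSup_subtype', ENNReal.sub_iSup ENNReal.ofReal_ne_top]
  refine le_iInf fun ⟨D, hD⟩ => iInf₂_le_of_le _ (isCorrespondence_of_isNonemptyPartition hD) ?_
  refine corrDistortion_partition_le hS D ?_
  grw [hediam, partitionSeparation_le_alphaSup hD]
  exact hge

/-- for a bounded metric space `X`, a simplex `λΔ_m` (here: a metric space
`S` of cardinality `m`, `1 < m ≤ #X`, all of whose nonzero distances equal `λ`), and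
`λ ≥ diam X + α_m(X)`, `λ > 0`, one has `2·d_GH(λΔ_m, X) = λ − α_m(X)`. -/
theorem stmt13 {X S : Type u} [MetricSpace X] [Nonempty X] [MetricSpace S]
    (hXb : EMetric.diam (Set.univ : Set X) ≠ ⊤)
    (lam : ℝ) (hlam : 0 < lam)
    (hS : ∀ p q : S, p ≠ q → dist p q = lam)
    (hS1 : 1 < Cardinal.mk S) (hSX : Cardinal.mk S ≤ Cardinal.mk X)
    (hge : ENNReal.ofReal (Metric.diam (Set.univ : Set X)) + alphaSup S X
        ≤ ENNReal.ofReal lam) :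
    2 * ghDist S X = ENNReal.ofReal lam - alphaSup S X :=
  stmt13_general hXb lam hS hS1 hSX hge
end
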